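/- Let A be a nonempty finite alphabet, let S be a product-free subset of the free semigroup F_A, and suppose d*(S) > 1/2 + ε for some ε > 0. Then there exists a strictly increasing sequence of positive integers (ℓ_k)_{k≥1} such that for every k ≥ 1, d_S(ℓ_1) + d_S(ℓ_2; ℓ_1) + … + d_S(ℓ_k; ℓ_1, ℓ_2, …, ℓ_{k−1}) ≥ 1 − 1/2^k. -/

import Mathlib

open Filter

/-- Density of `S` in the layer of words of length `n`:  `|S ∩ F_A(n)| / |A|^n`. -/
noncomputable def layerDensity (A : Type*) [Fintype A] (S : Set (List A)) (n : ℕ) : ℝ :=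
  ({w ∈ S | w.length = n} : Set (List A)).ncard / (Fintype.card A : ℝ) ^ n

/-- `S` is product-free under concatenation. -/
def ProductFree {A : Type*} (S : Set (List A)) : Prop := ∀ x ∈ S, ∀ y ∈ S, x ++ y ∉ S

/-- Upper asymptotic density: `limsup_{n → ∞} (∑_{i=1}^{n} d_S(i)) / n`. -/
noncomputable def upperAsympDensity (A : Type*) [Fintype A] (S : Set (List A)) : ℝ :=
  Filter.limsup (fun n : ℕ => (∑ i ∈ Finset.Icc 1 n, layerDensity A S i) / n) Filter.atTop

/-- Upper Banach density: `limsup_{n - m → ∞} (∑_{i=m}^{n} d_S(i)) / (n - m + 1)`. -/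
noncomputable def upperBanachDensity (A : Type*) [Fintype A] (S : Set (List A)) : ℝ :=
  Filter.limsup
    (fun p : ℕ × ℕ => (∑ i ∈ Finset.Icc p.1 p.2, layerDensity A S i) / ((p.2 - p.1 : ℕ) + 1))
    (Filter.comap (fun p : ℕ × ℕ => p.2 - p.1) Filter.atTop)

/-- `d_S(n; L)`: density in the layer of length-`n` words of the set of words of `S` of
length `n` having no prefix in `S` of length belonging to `L`. -/
noncomputable def restrictedDensity (A : Type*) [Fintype A] (S : Set (List A)) (n : ℕ)
    (L : Set ℕ) : ℝ :=
  ({w | w ∈ S ∧ w.length = n ∧ ∀ x ∈ S, x.length ∈ L → ¬ x <+: w} : Set (List A)).ncard /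
    (Fintype.card A : ℝ) ^ n

/-- The odd-occurrence set `O_Γ`: words in which the total number of occurrences of
symbols from `Γ` is odd. -/
def oddOcc {A : Type*} [DecidableEq A] (Γ : Finset A) : Set (List A) :=
  {w | Odd (w.countP (fun a => decide (a ∈ Γ)))}


section Aux
set_option maxHeartbeats 1000000
set_option linter.unusedSectionVars false
open Set Finset


lemma layer_ncard {A : Type*} [Fintype A] (n : ℕ) :
    ({w : List A | w.length = n}).ncard = Fintype.card A ^ n := by
  rw [← Nat.card_coe_set_eq]
  have e : ↥{w : List A | w.length = n} ≃ List.Vector A n := Equiv.refl _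
  rw [Nat.card_congr e, Nat.card_eq_fintype_card, card_vector]

section Bounds
variable {A : Type*} [Fintype A] [Nonempty A] (S : Set (List A))

lemma qpos : (0:ℝ) < (Fintype.card A : ℝ) := by
  exact_mod_cast Fintype.card_pos

lemma layer_sub_card (n : ℕ) (s : Set (List A)) (hs : ∀ w ∈ s, w.length = n) :
    s.ncard ≤ Fintype.card A ^ n := by
  rw [← layer_ncard (A := A) n]
  exact Set.ncard_le_ncard hs (List.finite_length_eq A n)

lemma layerDensity_nonneg (n : ℕ) : 0 ≤ layerDensity A S n :=
  div_nonneg (Nat.cast_nonneg _) (le_of_lt (pow_pos (qpos (A := A)) n))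

lemma layerDensity_le_one (n : ℕ) : layerDensity A S n ≤ 1 := by
  rw [layerDensity, div_le_one (pow_pos (qpos (A := A)) n)]
  have h := layer_sub_card (A := A) n {w ∈ S | w.length = n} (fun w hw => hw.2)
  exact_mod_cast h

lemma restrictedDensity_nonneg (n : ℕ) (L : Set ℕ) : 0 ≤ restrictedDensity A S n L :=
  div_nonneg (Nat.cast_nonneg _) (le_of_lt (pow_pos (qpos (A := A)) n))

lemma restrictedDensity_le_one (n : ℕ) (L : Set ℕ) : restrictedDensity A S n L ≤ 1 := by
  rw [restrictedDensity, div_le_one (pow_pos (qpos (A := A)) n)]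
  have h := layer_sub_card (A := A) n
    {w | w ∈ S ∧ w.length = n ∧ ∀ x ∈ S, x.length ∈ L → ¬ x <+: w} (fun w hw => hw.2.1)
  exact_mod_cast h

end Bounds


lemma ncard_prod' {α β : Type*} (s : Set α) (t : Set β) :
    (s ×ˢ t).ncard = s.ncard * t.ncard := by
  rw [← Nat.card_coe_set_eq, ← Nat.card_coe_set_eq, ← Nat.card_coe_set_eq,
    ← Nat.card_prod]
  exact Nat.card_congr (Equiv.Set.prod s t)

lemma ncard_biUnion_le' {α ι : Type*} (s : Finset ι) (f : ι → Set α) :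
    (⋃ i ∈ s, f i).ncard ≤ ∑ i ∈ s, (f i).ncard := by
  classical
  induction s using Finset.induction with
  | empty => simp
  | insert _ _ h ih =>
    rw [Finset.sum_insert h, Finset.set_biUnion_insert]
    exact le_trans (Set.ncard_union_le _ _) (by gcongr)

lemma count_step {A : Type*} [Fintype A] {S : Set (List A)} (hPF : ProductFree S)
    (g : ℕ → ℕ) (k n : ℕ) (hmono : ∀ i j, i < j → j < k → g i < g j) :
    ({w ∈ S | w.length = n} : Set (List A)).ncard ≤
      ({w | w ∈ S ∧ w.length = n ∧ ∀ x ∈ S, x.length ∈ g '' {j | j < k} → ¬ x <+: w} :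
          Set (List A)).ncard
      + ∑ j ∈ Finset.range k,
          ({w | w ∈ S ∧ w.length = g j ∧ ∀ x ∈ S, x.length ∈ g '' {i | i < j} → ¬ x <+: w} :
              Set (List A)).ncard
            * (Fintype.card A ^ (n - g j) - ({w ∈ S | w.length = n - g j} : Set (List A)).ncard) := by
  classical
  set L : Set ℕ := g '' {j | j < k} with hL
  set Res : Set (List A) := {w | w ∈ S ∧ w.length = n ∧ ∀ x ∈ S, x.length ∈ L → ¬ x <+: w}
  set T : ℕ → Set (List A) :=
    fun j => {w | w ∈ S ∧ w.length = g j ∧ ∀ x ∈ S, x.length ∈ g '' {i | i < j} → ¬ x <+: w}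
  set U : ℕ → Set (List A) := fun j => {y : List A | y ∉ S ∧ y.length = n - g j}
  set C : ℕ → Set (List A) := fun j => (fun p : List A × List A => p.1 ++ p.2) '' ((T j) ×ˢ (U j))
  have hTfin : ∀ j, (T j).Finite :=
    fun j => (List.finite_length_eq A (g j)).subset (fun w hw => hw.2.1)
  have hUfin : ∀ j, (U j).Finite :=
    fun j => (List.finite_length_eq A (n - g j)).subset (fun w hw => hw.2)
  -- main inclusion
  have hsub : {w ∈ S | w.length = n} ⊆ Res ∪ ⋃ j ∈ Finset.range k, C j := by
    intro w hw
    obtain ⟨hwS, hwlen⟩ := hw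
    by_cases hres : ∀ x ∈ S, x.length ∈ L → ¬ x <+: w
    · exact Or.inl ⟨hwS, hwlen, hres⟩
    push_neg at hres
    obtain ⟨x₀, hx₀S, hx₀L, hx₀p⟩ := hres
    have hne : {l : ℕ | ∃ x, x ∈ S ∧ x.length = l ∧ l ∈ L ∧ x <+: w}.Nonempty :=
      ⟨x₀.length, x₀, hx₀S, rfl, hx₀L, hx₀p⟩
    obtain ⟨l, ⟨x, hxS, hxl, hlL, hxw⟩, hmin⟩ := Nat.lt_wfRel.wf.has_min _ hne
    obtain ⟨j, hjk, hgj⟩ := hlL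
    simp only [Set.mem_setOf_eq] at hjk
    refine Or.inr (Set.mem_biUnion (Finset.mem_range.mpr hjk) ?_)
    obtain ⟨y, hy⟩ := hxw
    have hyS : y ∉ S := by
      intro hyS
      exact hPF x hxS y hyS (hy ▸ hwS)
    have hylen : y.length = n - g j := by
      have := congrArg List.length hy
      simp only [List.length_append] at this
      omega
    refine ⟨(x, y), ⟨⟨hxS, hxl.trans hgj.symm, ?_⟩, hyS, hylen⟩, hy⟩
    intro x'' hx''S hx''len hpre
    obtain ⟨i, hij, hgi⟩ := hx''len
    simp only [Set.mem_setOf_eq] at hij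
    refine hmin x''.length ⟨x'', hx''S, rfl, ⟨i, lt_trans hij hjk, hgi⟩,
      hpre.trans ⟨y, hy⟩⟩ ?_
    show x''.length < l
    have := hmono i j hij hjk
    omega
  -- cardinalities
  have hUcard : ∀ j, (U j).ncard
      = Fintype.card A ^ (n - g j) - ({w ∈ S | w.length = n - g j} : Set (List A)).ncard := by
    intro j
    have hUeq : U j = {w : List A | w.length = n - g j} \ {w ∈ S | w.length = n - g j} := by
      ext w
      simp only [Set.mem_setOf_eq, Set.mem_diff, U]
      tauto
    rw [hUeq, Set.ncard_diff (s := ({w ∈ S | w.length = n - g j} : Set (List A)))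
      (t := {w : List A | w.length = n - g j}) (fun w hw => hw.2)
      ((List.finite_length_eq A (n - g j)).subset (fun w hw => hw.2)), layer_ncard]
  calc ({w ∈ S | w.length = n} : Set (List A)).ncard
      ≤ (Res ∪ ⋃ j ∈ Finset.range k, C j).ncard := by
        exact Set.ncard_le_ncard hsub (Set.Finite.union
          ((List.finite_length_eq A n).subset (fun w hw => hw.2.1))
          (Set.Finite.biUnion (Finset.range k).finite_toSet
            (fun j _ => (((hTfin j).prod (hUfin j)).image _))))
    _ ≤ Res.ncard + (⋃ j ∈ Finset.range k, C j).ncard := Set.ncard_union_le _ _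
    _ ≤ Res.ncard + ∑ j ∈ Finset.range k, (C j).ncard := by
        gcongr
        exact ncard_biUnion_le' _ _
    _ ≤ Res.ncard + ∑ j ∈ Finset.range k, (T j).ncard
          * (Fintype.card A ^ (n - g j) - ({w ∈ S | w.length = n - g j} : Set (List A)).ncard) := by
        gcongr with j hj
        rw [← hUcard j, ← ncard_prod']
        exact Set.ncard_image_le ((hTfin j).prod (hUfin j))

lemma density_step {A : Type*} [Fintype A] [Nonempty A] {S : Set (List A)}
    (hPF : ProductFree S) (g : ℕ → ℕ) (k n : ℕ)
    (hmono : ∀ i j, i < j → j < k → g i < g j) (hn : ∀ j, j < k → g j < n) :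
    layerDensity A S n ≤ restrictedDensity A S n (g '' {j | j < k})
      + ∑ j ∈ Finset.range k,
          restrictedDensity A S (g j) (g '' {i | i < j}) * (1 - layerDensity A S (n - g j)) := by
  have hq : (0:ℝ) < (Fintype.card A : ℝ) := qpos (A := A)
  have hqn : ∀ m : ℕ, (0:ℝ) < (Fintype.card A : ℝ) ^ m := fun m => pow_pos hq m
  have h := count_step hPF g k n hmono
  -- cast to ℝ
  have hcast : (({w ∈ S | w.length = n} : Set (List A)).ncard : ℝ)
      ≤ ({w | w ∈ S ∧ w.length = n ∧ ∀ x ∈ S, x.length ∈ g '' {j | j < k} → ¬ x <+: w} :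
            Set (List A)).ncard
        + ∑ j ∈ Finset.range k,
            (({w | w ∈ S ∧ w.length = g j ∧ ∀ x ∈ S, x.length ∈ g '' {i | i < j} → ¬ x <+: w} :
                Set (List A)).ncard : ℝ)
              * ((Fintype.card A : ℝ) ^ (n - g j)
                  - ({w ∈ S | w.length = n - g j} : Set (List A)).ncard) := by
    have h' := (Nat.cast_le (α := ℝ)).mpr h
    rw [Nat.cast_add, Nat.cast_sum] at h'
    refine h'.trans_eq (congrArg _ (Finset.sum_congr rfl fun j hj => ?_))
    rw [Nat.cast_mul, Nat.cast_sub (layer_sub_card (A := A) _ _ (fun w hw => hw.2)),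
      Nat.cast_pow]
  calc layerDensity A S n
      ≤ (({w | w ∈ S ∧ w.length = n ∧ ∀ x ∈ S, x.length ∈ g '' {j | j < k} → ¬ x <+: w} :
            Set (List A)).ncard
          + ∑ j ∈ Finset.range k,
              (({w | w ∈ S ∧ w.length = g j ∧
                  ∀ x ∈ S, x.length ∈ g '' {i | i < j} → ¬ x <+: w} :
                  Set (List A)).ncard : ℝ)
                * ((Fintype.card A : ℝ) ^ (n - g j)
                    - ({w ∈ S | w.length = n - g j} : Set (List A)).ncard))
          / (Fintype.card A : ℝ) ^ n := by
        rw [layerDensity]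
        exact (div_le_div_iff_of_pos_right (hqn n)).mpr hcast
    _ = _ := by
        rw [add_div, Finset.sum_div]
        congr 1
        refine Finset.sum_congr rfl fun j hj => ?_
        rw [restrictedDensity, layerDensity]
        have hgjn : g j ≤ n := le_of_lt (hn j (Finset.mem_range.mp hj))
        have hsplit : (Fintype.card A : ℝ) ^ n
            = (Fintype.card A : ℝ) ^ (g j) * (Fintype.card A : ℝ) ^ (n - g j) := by
          rw [← pow_add]
          congr 1
          omega
        rw [hsplit]
        field_simp

lemma exists_window {A : Type*} [Fintype A] [Nonempty A] (S : Set (List A)) {ε : ℝ}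
    (hd : 1 / 2 + ε < upperBanachDensity A S) (N : ℕ) :
    ∃ m M : ℕ, N ≤ M - m ∧
      (1 / 2 + ε) * ((M - m : ℕ) + 1) < ∑ i ∈ Finset.Icc m M, layerDensity A S i := by
  set u : ℕ × ℕ → ℝ :=
    fun p => (∑ i ∈ Finset.Icc p.1 p.2, layerDensity A S i) / ((p.2 - p.1 : ℕ) + 1) with hu
  set F := Filter.comap (fun p : ℕ × ℕ => p.2 - p.1) Filter.atTop with hF
  have hFne : F.NeBot := by
    refine Filter.comap_neBot fun t ht => ?_
    obtain ⟨a, ha⟩ := Filter.mem_atTop_sets.mp ht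
    exact ⟨(0, a), ha a (by simp)⟩
  have hupos : ∀ p, 0 ≤ u p := by
    intro p
    apply div_nonneg
    · exact Finset.sum_nonneg fun i _ => layerDensity_nonneg S i
    · positivity
  have hcob : F.IsCoboundedUnder (· ≤ ·) u :=
    (Filter.isBoundedUnder_of (f := F) (u := u) (r := (· ≥ ·))
      ⟨0, fun p => hupos p⟩).isCoboundedUnder_le
  have hfreq : ∃ᶠ p in F, 1 / 2 + ε < u p := frequently_lt_of_lt_limsup hcob hd
  have hev : ∀ᶠ p in F, N ≤ p.2 - p.1 :=
    Filter.tendsto_comap.eventually (Filter.eventually_ge_atTop N)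
  obtain ⟨p, hp1, hp2⟩ := (hfreq.and_eventually hev).exists
  refine ⟨p.1, p.2, hp2, ?_⟩
  have hden : (0:ℝ) < ((p.2 - p.1 : ℕ) : ℝ) + 1 := by positivity
  have := (lt_div_iff₀ hden).mp hp1
  linarith

lemma exists_next {A : Type*} [Fintype A] [Nonempty A] {S : Set (List A)}
    (hPF : ProductFree S) {ε : ℝ} (hε : 0 < ε)
    (hd : 1 / 2 + ε < upperBanachDensity A S) (g : ℕ → ℕ) (k : ℕ)
    (hmono : ∀ i j, i < j → j < k → g i < g j) :
    ∃ n : ℕ, (∀ j, j < k → g j < n) ∧ 0 < n ∧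
      (1 - ∑ i ∈ Finset.range k, restrictedDensity A S (g i) (g '' {j | j < i})) / 2
        ≤ restrictedDensity A S n (g '' {j | j < k}) := by
  set d : ℕ → ℝ := layerDensity A S with hdd
  set r : ℕ → ℝ := fun n => restrictedDensity A S n (g '' {j | j < k}) with hr
  set t : ℕ → ℝ := fun j => restrictedDensity A S (g j) (g '' {i | i < j}) with ht
  set σ : ℝ := ∑ i ∈ Finset.range k, t i with hσ
  have hσ0 : 0 ≤ σ := Finset.sum_nonneg fun i _ => restrictedDensity_nonneg S _ _
  have hσk : σ ≤ k := by
    calc σ ≤ ∑ _i ∈ Finset.range k, (1:ℝ) :=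
          Finset.sum_le_sum fun i _ => restrictedDensity_le_one S _ _
      _ = k := by simp
  set b := (Finset.range k).sup g with hbdef
  have hb : ∀ j, j < k → g j ≤ b := fun j hj => Finset.le_sup (Finset.mem_range.mpr hj)
  obtain ⟨Nr, hNr⟩ := exists_nat_gt ((((k:ℝ)+1)*((b:ℝ)+1) + (k:ℝ)*(b:ℝ))/ε)
  obtain ⟨m, M, hNmM, hsum⟩ := exists_window S hd (2*b + 2 + Nr)
  set m' := m + b + 1 with hm'def
  have hm'M : m' + b < M := by omega
  set W := Finset.Icc m' M with hW
  set c : ℕ := M - m' + 1 with hcdef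
  have hcW : W.card = c := by rw [hW, Nat.card_Icc]; omega
  have hcNr : Nr + b + 2 ≤ c := by omega
  set D := ∑ n ∈ W, d n with hD
  -- lower bound on D
  have hsplit1 : ∑ i ∈ Finset.Icc m M, d i = ∑ i ∈ Finset.Ico m m', d i + D := by
    rw [hD, hW, ← Finset.Ico_add_one_right_eq_Icc m M, ← Finset.Ico_add_one_right_eq_Icc m' M]
    exact (Finset.sum_Ico_consecutive _ (by omega) (by omega)).symm
  have hIco_le : ∑ i ∈ Finset.Ico m m', d i ≤ ((b:ℝ)+1) := by
    have h := Finset.sum_le_card_nsmul (Finset.Ico m m') d 1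
      (fun i _ => layerDensity_le_one S i)
    rw [Nat.card_Ico, nsmul_eq_mul, mul_one] at h
    calc ∑ i ∈ Finset.Ico m m', d i ≤ ((m' - m : ℕ) : ℝ) := h
      _ = ((b:ℝ)+1) := by
          have : m' - m = b + 1 := by omega
          rw [this]; push_cast; ring
  have hcle : (c:ℝ) ≤ ((M - m : ℕ) : ℝ) + 1 := by
    have : c ≤ (M - m) + 1 := by omega
    exact_mod_cast this
  have hDlow : (1/2+ε) * (c:ℝ) - ((b:ℝ)+1) ≤ D := by
    have h1 : (1/2+ε) * (c:ℝ) ≤ (1/2+ε) * (((M - m : ℕ) : ℝ) + 1) :=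
      mul_le_mul_of_nonneg_left hcle (by linarith)
    linarith [hsum, hsplit1, hIco_le]
  have hDc : D ≤ (c:ℝ) := by
    have h := Finset.sum_le_card_nsmul W d 1 (fun i _ => layerDensity_le_one S i)
    rwa [hcW, nsmul_eq_mul, mul_one] at h
  -- shifted sums
  have hshift : ∀ j, j < k → D - (b:ℝ) ≤ ∑ n ∈ W, d (n - g j) := by
    intro j hj
    have hab : g j ≤ b := hb j hj
    have e1 : ∑ n ∈ W, d (n - g j) = ∑ i ∈ Finset.Icc (m' - g j) (M - g j), d i := by
      have hmap : W = Finset.map (addRightEmbedding (g j))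
          (Finset.Icc (m' - g j) (M - g j)) := by
        rw [Finset.map_add_right_Icc, hW]
        congr 1 <;> omega
      rw [hmap, Finset.sum_map]
      exact Finset.sum_congr rfl fun i _ => by simp
    have e2 : ∑ i ∈ Finset.Icc m' (M - g j), d i
        ≤ ∑ i ∈ Finset.Icc (m' - g j) (M - g j), d i :=
      Finset.sum_le_sum_of_subset_of_nonneg
        (Finset.Icc_subset_Icc (by omega) le_rfl)
        (fun i _ _ => layerDensity_nonneg S i)
    have e3 : D ≤ ∑ i ∈ Finset.Icc m' (M - g j), d i + (b:ℝ) := by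
      have hsplit2 : D = ∑ i ∈ Finset.Ico m' (M - g j + 1), d i
          + ∑ i ∈ Finset.Ico (M - g j + 1) (M+1), d i := by
        rw [hD, hW, ← Finset.Ico_add_one_right_eq_Icc m' M]
        exact (Finset.sum_Ico_consecutive _ (by omega) (by omega)).symm
      have h4 : ∑ i ∈ Finset.Ico (M - g j + 1) (M+1), d i ≤ ((g j : ℕ) : ℝ) := by
        have h := Finset.sum_le_card_nsmul (Finset.Ico (M - g j + 1) (M+1)) d 1
          (fun i _ => layerDensity_le_one S i)
        rw [Nat.card_Ico, nsmul_eq_mul, mul_one] at h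
        calc ∑ i ∈ Finset.Ico (M - g j + 1) (M+1), d i
            ≤ ((M + 1 - (M - g j + 1) : ℕ) : ℝ) := h
          _ = ((g j : ℕ) : ℝ) := by congr 1; omega
      have hgb : ((g j : ℕ) : ℝ) ≤ (b:ℝ) := by exact_mod_cast hab
      rw [← Finset.Ico_add_one_right_eq_Icc m' (M - g j)]
      linarith
    linarith [e1, e2, e3]
  -- per-n inequality
  have hper : ∀ n ∈ W, d n ≤ r n + ∑ j ∈ Finset.range k, t j * (1 - d (n - g j)) := by
    intro n hn
    refine density_step hPF g k n hmono (fun j hj => ?_)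
    have := hb j hj
    have := (Finset.mem_Icc.mp hn).1
    omega
  have hsum2 : D ≤ ∑ n ∈ W, r n
      + ∑ n ∈ W, ∑ j ∈ Finset.range k, t j * (1 - d (n - g j)) := by
    have h := Finset.sum_le_sum hper
    rwa [Finset.sum_add_distrib] at h
  have hswap : ∑ n ∈ W, ∑ j ∈ Finset.range k, t j * (1 - d (n - g j))
      = ∑ j ∈ Finset.range k, t j * ((c:ℝ) - ∑ n ∈ W, d (n - g j)) := by
    rw [Finset.sum_comm]
    refine Finset.sum_congr rfl fun j hj => ?_
    rw [← Finset.mul_sum, Finset.sum_sub_distrib, Finset.sum_const, hcW, nsmul_eq_mul, mul_one]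
  have hbound : ∑ j ∈ Finset.range k, t j * ((c:ℝ) - ∑ n ∈ W, d (n - g j))
      ≤ σ * ((c:ℝ) - D + (b:ℝ)) := by
    rw [hσ, Finset.sum_mul]
    refine Finset.sum_le_sum fun j hj => ?_
    have h := hshift j (Finset.mem_range.mp hj)
    exact mul_le_mul_of_nonneg_left (by linarith) (restrictedDensity_nonneg S _ _)
  have hRlow : D * (1+σ) - σ*((c:ℝ)+(b:ℝ)) ≤ ∑ n ∈ W, r n := by nlinarith [hsum2, hswap, hbound]
  -- numeric endgame
  have hc0 : (0:ℝ) ≤ (c:ℝ) := Nat.cast_nonneg c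
  have hb0 : (0:ℝ) ≤ (b:ℝ) := Nat.cast_nonneg b
  have hεc : ((k:ℝ)+1)*((b:ℝ)+1) + (k:ℝ)*(b:ℝ) < ε * (c:ℝ) := by
    have h1 := (div_lt_iff₀ hε).mp hNr
    have h2 : (Nr:ℝ) ≤ (c:ℝ) := by exact_mod_cast (by omega : Nr ≤ c)
    nlinarith [hε.le]
  have hfinal : (c:ℝ) * ((1 - σ)/2) ≤ ∑ n ∈ W, r n := by
    have h1 : ((1/2+ε) * (c:ℝ) - ((b:ℝ)+1)) * (1+σ) ≤ D*(1+σ) :=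
      mul_le_mul_of_nonneg_right hDlow (by linarith)
    have h2 : σ*(b:ℝ) ≤ (k:ℝ)*(b:ℝ) := mul_le_mul_of_nonneg_right hσk hb0
    have h3 : ((b:ℝ)+1)*σ ≤ ((b:ℝ)+1)*(k:ℝ) := mul_le_mul_of_nonneg_left hσk (by linarith)
    have h4 : 0 ≤ (ε*(c:ℝ))*σ := mul_nonneg (mul_nonneg hε.le hc0) hσ0
    nlinarith [hRlow, h1, h2, h3, h4, hεc]
  have hWne : W.Nonempty := Finset.nonempty_Icc.mpr (by omega)
  have hconst : ∑ _n ∈ W, ((1-σ)/2) ≤ ∑ n ∈ W, r n := by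
    rw [Finset.sum_const, hcW, nsmul_eq_mul]
    exact hfinal
  obtain ⟨n, hnW, hrn⟩ := Finset.exists_le_of_sum_le hWne hconst
  have hnm' : m' ≤ n := (Finset.mem_Icc.mp hnW).1
  exact ⟨n, fun j hj => by have := hb j hj; omega, by omega, hrn⟩

end Aux

section Main
set_option maxHeartbeats 1000000
open Set Finset

/-- If `S` is product-free with `d*(S) > 1/2 + ε`, then there is a strictly increasing
sequence of positive integers `(ℓ_k)` with
`d_S(ℓ_1) + d_S(ℓ_2; ℓ_1) + ⋯ + d_S(ℓ_k; ℓ_1,…,ℓ_{k-1}) ≥ 1 - 1/2^k` for every `k`. -/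
theorem productFree_exists_increasing_sequence
    {A : Type*} [Fintype A] [Nonempty A] {S : Set (List A)}
    (hS : [] ∉ S) (hPF : ProductFree S)
    {ε : ℝ} (hε : 0 < ε) (hd : 1 / 2 + ε < upperBanachDensity A S) :
    ∃ ℓ : ℕ → ℕ, StrictMono ℓ ∧ (∀ k, 0 < ℓ k) ∧
      ∀ k : ℕ, 1 - 1 / 2 ^ k ≤
        ∑ i ∈ Finset.range k, restrictedDensity A S (ℓ i) (ℓ '' {j | j < i}) := by
  classical
  have key : ∀ (g : ℕ → ℕ) (k : ℕ), ∃ n : ℕ, (∀ i j, i < j → j < k → g i < g j) →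
      ((∀ j, j < k → g j < n) ∧ 0 < n ∧
        (1 - ∑ i ∈ Finset.range k, restrictedDensity A S (g i) (g '' {j | j < i})) / 2
          ≤ restrictedDensity A S n (g '' {j | j < k})) := by
    intro g k
    by_cases h : ∀ i j, i < j → j < k → g i < g j
    · obtain ⟨n, h1, h2, h3⟩ := exists_next hPF hε hd g k h
      exact ⟨n, fun _ => ⟨h1, h2, h3⟩⟩
    · exact ⟨1, fun h' => absurd h' h⟩
  choose F hF using key
  let seq : ℕ → ℕ := fun k =>
    Nat.lt_wfRel.wf.fix (fun k ih => F (fun j => if h : j < k then ih j h else 0) k) k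
  have hseq : ∀ k, seq k = F (fun j => if h : j < k then seq j else 0) k := fun k =>
    WellFounded.fix_eq _ _ k
  have inv : ∀ k, (∀ j, j < k → 0 < seq j) ∧ (∀ i j, i < j → j < k → seq i < seq j) ∧
      1 - 1 / 2 ^ k ≤
        ∑ i ∈ Finset.range k, restrictedDensity A S (seq i) (seq '' {j | j < i}) := by
    intro k
    induction k with
    | zero => refine ⟨by omega, by omega, by norm_num⟩
    | succ k ih =>
      obtain ⟨hpos, hmono, hsum⟩ := ih
      set g' : ℕ → ℕ := fun j => if h : j < k then seq j else 0 with hg'def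
      have hg' : ∀ j, j < k → g' j = seq j := fun j hj => dif_pos hj
      have hmono' : ∀ i j, i < j → j < k → g' i < g' j := by
        intro i j hij hjk
        rw [hg' i (lt_trans hij hjk), hg' j hjk]
        exact hmono i j hij hjk
      obtain ⟨hlt, hpos', hrd⟩ := hF g' k hmono'
      rw [← hseq k] at hlt hpos' hrd
      have himg : g' '' {j | j < k} = seq '' {j | j < k} :=
        Set.image_congr (fun j hj => hg' j hj)
      have hsum_eq : ∑ i ∈ Finset.range k, restrictedDensity A S (g' i) (g' '' {j | j < i})
          = ∑ i ∈ Finset.range k, restrictedDensity A S (seq i) (seq '' {j | j < i}) := by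
        refine Finset.sum_congr rfl fun i hi => ?_
        have hik := Finset.mem_range.mp hi
        have himg' : g' '' {j | j < i} = seq '' {j | j < i} :=
          Set.image_congr (fun j hj => hg' j (lt_trans hj hik))
        rw [hg' i hik, himg']
      rw [himg, hsum_eq] at hrd
      refine ⟨?_, ?_, ?_⟩
      · intro j hj
        rcases Nat.lt_succ_iff_lt_or_eq.mp hj with h | h
        · exact hpos j h
        · rw [h]; exact hpos'
      · intro i j hij hjk
        rcases Nat.lt_succ_iff_lt_or_eq.mp hjk with h | h
        · exact hmono i j hij h
        · rw [h]
          have := hlt i (h ▸ hij)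
          rwa [hg' i (h ▸ hij)] at this
      · rw [Finset.sum_range_succ]
        have hhalf : (1:ℝ) / 2 ^ (k+1) = (1 / 2 ^ k) / 2 := by ring
        linarith
  refine ⟨seq, ?_, ?_, ?_⟩
  · exact fun i j hij => (inv (j+1)).2.1 i j hij (Nat.lt_succ_self j)
  · exact fun k => (inv (k+1)).1 k (Nat.lt_succ_self k)
  · exact fun k => (inv k).2.2

end Main
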